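/- In the semidirect product X ⋊ B formed with the given action, conjugation by the element (δ, 1) carries the composite of (x, b) with the identity arrow (1, b) to (x, b) itself: for all b ∈ B and x ∈ X, (δ, 1)·(x·δ⁻¹·(b·δ), b)·(δ, 1)⁻¹ = (x, b). Thus (δ, 1) realizes the unit isomorphism of the pseudo-category in groups associated to (∂, δ, the action). -/

import Mathlib

theorem SemidirectProduct.mk_one_mul_mk_mul_mk_one_inv {N G : Type*} [Group N] [Group G]
    {φ : G →* MulAut N} (n m : N) (g : G) :
    (⟨n, 1⟩ : N ⋊[φ] G) * ⟨m, g⟩ * (⟨n, 1⟩ : N ⋊[φ] G)⁻¹ = ⟨n * m * (φ g n)⁻¹, g⟩ := by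
  ext <;> simp

theorem commute_of_peiffer_of_map_eq_one {B X : Type*} [Group B] [Group X]
    (d : X →* B) (act : B →* MulAut X) (peiffer : ∀ x x' : X, act (d x) x' = x * x' * x⁻¹)
    {δ : X} (hδ : d δ = 1) (x : X) : Commute δ x := by
  have hconj : δ * x * δ⁻¹ = x := by
    rw [← peiffer, hδ, map_one, MulAut.one_apply]
  rwa [mul_inv_eq_iff_eq_mul] at hconj

theorem delta_realizes_unit_isomorphism_general
    (B X : Type*) [Group B] [Group X]
    (d : X →* B) (act : B →* MulAut X)
    (peiffer : ∀ x x' : X, act (d x) x' = x * x' * x⁻¹)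
    (δ : X) (hδ : d δ = 1) :
    ∀ (b : B) (x : X),
      (⟨δ, 1⟩ : X ⋊[act] B) * ⟨x * δ⁻¹ * act b δ, b⟩ * (⟨δ, 1⟩ : X ⋊[act] B)⁻¹
        = ⟨x, b⟩ := by
  intro b x
  rw [SemidirectProduct.mk_one_mul_mk_mul_mk_one_inv]
  congr 1
  calc δ * (x * δ⁻¹ * act b δ) * (act b δ)⁻¹ = δ * x * δ⁻¹ := by group
    _ = x := (commute_of_peiffer_of_map_eq_one d act peiffer hδ x).mul_inv_cancel

/-- STATEMENT 13: In the semidirect product `X ⋊ B` formed with the given action,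
conjugation by the element `(δ, 1)` carries the composite of `(x, b)` with the
identity arrow `(1, b)` to `(x, b)` itself: for all `b ∈ B` and `x ∈ X`,
`(δ, 1) * (x * δ⁻¹ * (b • δ), b) * (δ, 1)⁻¹ = (x, b)`.
Thus `(δ, 1)` realizes the unit isomorphism of the pseudo-category in groups
associated to `(∂, δ, the action)`. -/
theorem delta_realizes_unit_isomorphism
    (B X : Type*) [Group B] [Group X]
    (d : X →* B) (act : B →* MulAut X)
    (equivariance : ∀ (b : B) (x : X), d (act b x) = b * d x * b⁻¹)
    (peiffer : ∀ x x' : X, act (d x) x' = x * x' * x⁻¹)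
    (δ : X) (hδ : d δ = 1) :
    ∀ (b : B) (x : X),
      (⟨δ, 1⟩ : X ⋊[act] B) * ⟨x * δ⁻¹ * act b δ, b⟩ * (⟨δ, 1⟩ : X ⋊[act] B)⁻¹
        = ⟨x, b⟩ :=
  delta_realizes_unit_isomorphism_general B X d act peiffer δ hδ
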